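/- For positive definite A, B and r, t ∈ [0,1], the Bures-Wasserstein geodesic satisfies the reparametrization identity A◇_r(A◇_t B) = A◇_{rt} B. -/

import Mathlib

open Matrix Filter Asymptotics
open scoped ComplexOrder

/-- The PSD square root of a matrix (0 if not PSD). -/
noncomputable def msqrt {n : ℕ} (M : Matrix (Fin n) (Fin n) ℂ) : Matrix (Fin n) (Fin n) ℂ :=
  letI := Classical.propDecidable M.PosSemidef
  if h : M.PosSemidef then
    h.1.eigenvectorUnitary.1 * diagonal ((↑) ∘ (√·) ∘ h.1.eigenvalues) *
      (star h.1.eigenvectorUnitary : Matrix (Fin n) (Fin n) ℂ)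
  else 0

/-- `(AB)^{1/2} := A^{1/2} (A^{1/2} B A^{1/2})^{1/2} A^{-1/2}`. -/
noncomputable def sqAB {n : ℕ} (A B : Matrix (Fin n) (Fin n) ℂ) : Matrix (Fin n) (Fin n) ℂ :=
  msqrt A * msqrt (msqrt A * B * msqrt A) * (msqrt A)⁻¹

/-- Bures-Wasserstein geodesic `A ◇_t B`. -/
noncomputable def geo {n : ℕ} (A B : Matrix (Fin n) (Fin n) ℂ) (t : ℝ) : Matrix (Fin n) (Fin n) ℂ :=
  ((1 - t)^2 : ℝ) • A + (t^2 : ℝ) • B + (t * (1 - t) : ℝ) • (sqAB A B + (sqAB A B)ᴴ)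

/-- Bures-Wasserstein distance. -/
noncomputable def dBW {n : ℕ} (A B : Matrix (Fin n) (Fin n) ℂ) : ℝ :=
  Real.sqrt ((Matrix.trace A).re + (Matrix.trace B).re -
    2 * (Matrix.trace (msqrt (msqrt A * B * msqrt A))).re)

/-! Write `S = A^{1/2}`. Conjugation by `S` turns the geodesic into a square of a linear
interpolation: `S (A ◇_u X) S = ((1 - u) A + u (S X S)^{1/2})²`. Taking `X = A ◇_t B` and
`C = (S B S)^{1/2}`, this says `(S X S)^{1/2} = (1 - t) A + t C`, so the interpolation
parameters multiply: `(1 - r) A + r ((1 - t) A + t C) = (1 - r t) A + r t C`. Since `S` is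
invertible, the identity follows after cancelling `S` on both sides. -/

open scoped MatrixOrder

lemma Matrix.IsHermitian.posSemidef_mul_self {m R : Type*} [Fintype m] [CommRing R]
    [PartialOrder R] [StarRing R] [StarOrderedRing R] {X : Matrix m m R} (hX : X.IsHermitian) :
    (X * X).PosSemidef := by
  simpa only [hX.eq] using posSemidef_conjTranspose_mul_self X

variable {n : ℕ} {A : Matrix (Fin n) (Fin n) ℂ}

lemma msqrt_eq_cfcSqrt {M : Matrix (Fin n) (Fin n) ℂ} (hM : M.PosSemidef) :
    msqrt M = CFC.sqrt M := by
  rw [msqrt, dif_pos hM, CFC.sqrt_eq_cfc, cfc_nnreal_eq_real _ M, hM.1.cfc_eq]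
  simp only [IsHermitian.cfc, Unitary.conjStarAlgAut_apply]
  congr 3
  funext i
  simp [Real.coe_sqrt, Real.coe_toNNReal', max_eq_left (hM.eigenvalues_nonneg i)]

lemma isHermitian_msqrt (M : Matrix (Fin n) (Fin n) ℂ) : (msqrt M).IsHermitian := by
  by_cases hM : M.PosSemidef
  · rw [msqrt_eq_cfcSqrt hM]
    exact (CFC.sqrt_nonneg M).posSemidef.isHermitian
  · rw [msqrt, dif_neg hM]
    exact isHermitian_zero

lemma Matrix.PosSemidef.msqrt {M : Matrix (Fin n) (Fin n) ℂ} (hM : M.PosSemidef) :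
    (msqrt M).PosSemidef := by
  rw [msqrt_eq_cfcSqrt hM]
  exact (CFC.sqrt_nonneg M).posSemidef

lemma msqrt_mul_msqrt {M : Matrix (Fin n) (Fin n) ℂ} (hM : M.PosSemidef) :
    msqrt M * msqrt M = M := by
  rw [msqrt_eq_cfcSqrt hM]
  exact CFC.sqrt_mul_sqrt_self M hM.nonneg

lemma msqrt_mul_self {X : Matrix (Fin n) (Fin n) ℂ} (hX : X.PosSemidef) :
    msqrt (X * X) = X := by
  rw [msqrt_eq_cfcSqrt hX.isHermitian.posSemidef_mul_self]
  exact CFC.sqrt_mul_self X hX.nonneg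

lemma isUnit_msqrt (hA : A.PosDef) : IsUnit (msqrt A) :=
  isUnit_of_mul_isUnit_left ((msqrt_mul_msqrt hA.posSemidef).symm ▸ hA.isUnit)

lemma msqrt_mul_sqAB_mul_msqrt (hA : A.PosDef) (X : Matrix (Fin n) (Fin n) ℂ) :
    msqrt A * sqAB A X * msqrt A = A * msqrt (msqrt A * X * msqrt A) := by
  have hS := (isUnit_iff_isUnit_det _).mp (isUnit_msqrt hA)
  simp only [sqAB, Matrix.mul_assoc, nonsing_inv_mul _ hS, Matrix.mul_one]
  rw [← Matrix.mul_assoc, msqrt_mul_msqrt hA.posSemidef]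

lemma msqrt_mul_sqAB_conjTranspose_mul_msqrt (hA : A.PosDef) (X : Matrix (Fin n) (Fin n) ℂ) :
    msqrt A * (sqAB A X)ᴴ * msqrt A = msqrt (msqrt A * X * msqrt A) * A := by
  have hS := (isUnit_iff_isUnit_det _).mp (isUnit_msqrt hA)
  simp only [sqAB, conjTranspose_mul, conjTranspose_nonsing_inv, (isHermitian_msqrt _).eq,
    Matrix.mul_assoc, mul_nonsing_inv_cancel_left (h := hS), msqrt_mul_msqrt hA.posSemidef]

lemma msqrt_mul_geo_mul_msqrt (hA : A.PosDef) (X : Matrix (Fin n) (Fin n) ℂ)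
    (hX : (msqrt A * X * msqrt A).PosSemidef) (u : ℝ) :
    msqrt A * geo A X u * msqrt A =
      ((1 - u) • A + u • msqrt (msqrt A * X * msqrt A)) *
        ((1 - u) • A + u • msqrt (msqrt A * X * msqrt A)) := by
  have hXX := msqrt_mul_msqrt hX
  have hAA : msqrt A * A * msqrt A = A * A := by
    have hSS := msqrt_mul_msqrt hA.posSemidef
    set S := msqrt A
    rw [← hSS]
    simp only [Matrix.mul_assoc]
  simp only [geo, Matrix.mul_add, Matrix.add_mul, Matrix.mul_smul, Matrix.smul_mul, hAA,
    msqrt_mul_sqAB_mul_msqrt hA, msqrt_mul_sqAB_conjTranspose_mul_msqrt hA, hXX]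
  module

theorem stmt5_general {n : ℕ} (A B : Matrix (Fin n) (Fin n) ℂ)
    (hA : A.PosDef) (hB : B.PosDef) (r t : ℝ)
    (ht0 : 0 ≤ t) (ht1 : t ≤ 1) :
    geo A (geo A B t) r = geo A B (r * t) := by
  have hSBS : (msqrt A * B * msqrt A).PosSemidef := by
    simpa only [(isHermitian_msqrt A).eq] using hB.posSemidef.conjTranspose_mul_mul_same (msqrt A)
  set C := msqrt (msqrt A * B * msqrt A)
  set Xt := (1 - t) • A + t • C
  have hXt : Xt.PosSemidef := (hA.posSemidef.smul (sub_nonneg.2 ht1)).add (hSBS.msqrt.smul ht0)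
  have hgeo : msqrt A * geo A B t * msqrt A = Xt * Xt := msqrt_mul_geo_mul_msqrt hA B hSBS t
  have hgeo_psd : (msqrt A * geo A B t * msqrt A).PosSemidef :=
    hgeo ▸ hXt.isHermitian.posSemidef_mul_self
  have hroot : msqrt (msqrt A * geo A B t * msqrt A) = Xt := by rw [hgeo, msqrt_mul_self hXt]
  apply (isUnit_msqrt hA).mul_left_cancel
  apply (isUnit_msqrt hA).mul_right_cancel
  rw [msqrt_mul_geo_mul_msqrt hA _ hgeo_psd, hroot, msqrt_mul_geo_mul_msqrt hA B hSBS]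
  congr 1 <;> module

theorem stmt5 {n : ℕ} (A B : Matrix (Fin n) (Fin n) ℂ)
    (hA : A.PosDef) (hB : B.PosDef) (r t : ℝ)
    (hr0 : 0 ≤ r) (hr1 : r ≤ 1) (ht0 : 0 ≤ t) (ht1 : t ≤ 1) :
    geo A (geo A B t) r = geo A B (r * t) :=
  stmt5_general A B hA hB r t ht0 ht1
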